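/- arXiv:2006.14774 — 3 statements merged into one kernel-verified Lean document; each statement's English description precedes it below -/
import Mathlib

section
/- If in addition Σ is Hermitian positive definite, then the achievable-rate determinant and the minimum mean-squared-error matrix are related by det(I_k + S Σ Sᴴ R_in⁻¹) · det(E*) = det(Σ); equivalently, the rate satisfies log det(I_k + S Σ Sᴴ R_in⁻¹) = log det(Σ (E*)⁻¹). -/
open Matrix
open scoped ComplexOrder

/-!
Both determinants come from the block matrix `[[Σ, Σ Sᴴ], [S Σ, R]]`: eliminating the top-left
block gives `det Σ · det R_in` (its Schur complement is `R − S Σ Sᴴ = R_in`), eliminating the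
bottom-right block gives `det R · det E*`. Since `det (I + S Σ Sᴴ R_in⁻¹) · det R_in = det R`,
cancelling `det R` yields the identity, and the logarithmic form follows by taking `det Σ / det E*`.
-/

namespace Matrix

variable {m n 𝕜 : Type*} [Fintype m] [DecidableEq m] [Fintype n] [DecidableEq n] [Field 𝕜]

theorem det_one_add_mul_inv_mul_det (A B : Matrix m m 𝕜) (hB : B.det ≠ 0) :
    (1 + A * B⁻¹).det * B.det = (A + B).det := by
  rw [← det_mul, add_mul, one_mul, nonsing_inv_mul_cancel_right _ _ hB.isUnit, add_comm]

theorem det_mul_inv_eq_div (A B : Matrix m m 𝕜) : (A * B⁻¹).det = A.det / B.det := by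
  rw [det_mul, det_nonsing_inv, Ring.inverse_eq_inv, div_eq_mul_inv]

theorem det_sub_mul_inv_mul_mul_det_add (Sg : Matrix n n 𝕜) (S : Matrix m n 𝕜)
    (T : Matrix n m 𝕜) (Rn : Matrix m m 𝕜) (hSg : Sg.det ≠ 0)
    (hR : (S * Sg * T + Rn).det ≠ 0) :
    (Sg - Sg * T * (S * Sg * T + Rn)⁻¹ * S * Sg).det * (S * Sg * T + Rn).det =
      Sg.det * Rn.det := by
  let _ := Sg.invertibleOfIsUnitDet hSg.isUnit
  let _ := (S * Sg * T + Rn).invertibleOfIsUnitDet hR.isUnit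
  have h₁₁ := det_fromBlocks₁₁ Sg (Sg * T) (S * Sg) (S * Sg * T + Rn)
  have h₂₂ := det_fromBlocks₂₂ Sg (Sg * T) (S * Sg) (S * Sg * T + Rn)
  rw [invOf_eq_nonsing_inv, mul_nonsing_inv_cancel_right _ _ hSg.isUnit, ← Matrix.mul_assoc,
    add_sub_cancel_left] at h₁₁
  rw [invOf_eq_nonsing_inv] at h₂₂
  rw [mul_comm, ← h₁₁, h₂₂]
  simp only [Matrix.mul_assoc]

end Matrix

/-- if `Σ` is positive definite then
`det(I + S Σ Sᴴ R_in⁻¹) · det(E*) = det(Σ)`, equivalently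
`log det(I + S Σ Sᴴ R_in⁻¹) = log det(Σ (E*)⁻¹)` (both determinants being
positive reals). -/
theorem rate_eq_logdet_mmse {k n : ℕ}
    (S : Matrix (Fin k) (Fin n) ℂ) (Sg : Matrix (Fin n) (Fin n) ℂ)
    (Rin : Matrix (Fin k) (Fin k) ℂ)
    (hSg : Sg.PosDef) (hRin : Rin.PosDef) :
    ((1 : Matrix (Fin k) (Fin k) ℂ) + S * Sg * Sᴴ * Rin⁻¹).det *
        (Sg - Sg * Sᴴ * (S * Sg * Sᴴ + Rin)⁻¹ * S * Sg).det = Sg.det ∧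
    Real.log (((1 : Matrix (Fin k) (Fin k) ℂ) + S * Sg * Sᴴ * Rin⁻¹).det).re =
      Real.log ((Sg * (Sg - Sg * Sᴴ * (S * Sg * Sᴴ + Rin)⁻¹ * S * Sg)⁻¹).det).re := by
  have hR : (S * Sg * Sᴴ + Rin).PosDef :=
    hRin.posSemidef_add (hSg.posSemidef.mul_mul_conjTranspose_same S)
  have hRdet := hR.det_pos.ne'
  have hRate := det_one_add_mul_inv_mul_det (S * Sg * Sᴴ) Rin hRin.det_pos.ne'
  have hSchur := det_sub_mul_inv_mul_mul_det_add Sg S Sᴴ Rin hSg.det_pos.ne' hRdet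
  have key : ((1 : Matrix (Fin k) (Fin k) ℂ) + S * Sg * Sᴴ * Rin⁻¹).det *
      (Sg - Sg * Sᴴ * (S * Sg * Sᴴ + Rin)⁻¹ * S * Sg).det = Sg.det := by
    refine mul_right_cancel₀ hRdet ?_
    linear_combination (1 + S * Sg * Sᴴ * Rin⁻¹).det * hSchur + Sg.det * hRate
  refine ⟨key, ?_⟩
  have hEdet : (Sg - Sg * Sᴴ * (S * Sg * Sᴴ + Rin)⁻¹ * S * Sg).det ≠ 0 :=
    right_ne_zero_of_mul (key ▸ hSg.det_pos.ne')
  rw [det_mul_inv_eq_div, ← key, mul_div_cancel_right₀ _ hEdet]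
end

section
/- Suppose in addition that Σ is Hermitian positive definite. Then the infimum over all n×k complex matrices U and all n×n Hermitian positive definite matrices W of the weighted-MMSE objective tr(W E(U)) − log det(W) equals n + log det(Σ) − log det(I_k + S Σ Sᴴ R_in⁻¹), and it is attained at U* = Σ Sᴴ R⁻¹ and W* = E(U*)⁻¹. Consequently, over any family of matrices S, maximizing the mutual-information rate log det(I_k + S Σ Sᴴ R_in⁻¹) is equivalent to minimizing the jointly optimized weighted-MMSE objective. -/
/-!
Completing the square gives `E(U) = E(U*) + (U - U*) R (U - U*)ᴴ`, so replacing `U` by `U*` can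
only decrease `tr(W E(U))`. For positive definite `W` and `P = Bᴴ B`, the eigenvalues `λ` of
`B W Bᴴ` satisfy `log λ ≤ λ - 1`, whence `tr(W P) - log det W ≥ n + log det P`, with equality at
`W = P⁻¹`. By the Woodbury identity `E(U*) = (Σ⁻¹ + Sᴴ R_in⁻¹ S)⁻¹`, and by Sylvester's determinant
identity `det Σ · det(Σ⁻¹ + Sᴴ R_in⁻¹ S) = det(I + S Σ Sᴴ R_in⁻¹)`, which yields the value.
-/

open Matrix RCLike
open scoped ComplexOrder

namespace Matrix

variable {𝕜 m n : Type*} [RCLike 𝕜] [Fintype m] [Fintype n] [DecidableEq m] [DecidableEq n]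

namespace PosDef

variable {A : Matrix n n 𝕜}

lemma re_det_pos (hA : A.PosDef) : 0 < re A.det :=
  (pos_iff.mp hA.det_pos).1

lemma ofReal_re_det (hA : A.PosDef) : ((re A.det : ℝ) : 𝕜) = A.det :=
  conj_eq_iff_re.mp (conj_eq_iff_im.mpr (pos_iff.mp hA.det_pos).2)

lemma re_det_mul (hA : A.PosDef) (z : 𝕜) : re (A.det * z) = re A.det * re z := by
  rw [← hA.ofReal_re_det, re_ofReal_mul, ofReal_re]

lemma log_re_det_inv (hA : A.PosDef) : Real.log (re A⁻¹.det) = -Real.log (re A.det) := by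
  rw [det_nonsing_inv, Ring.inverse_eq_inv', ← hA.ofReal_re_det, ← ofReal_inv, ofReal_re,
    ofReal_re, Real.log_inv]

lemma card_add_log_re_det_le_re_trace (hA : A.PosDef) :
    (Fintype.card n : ℝ) + Real.log (re A.det) ≤ re A.trace := by
  have hpos := hA.eigenvalues_pos
  rw [hA.1.det_eq_prod_eigenvalues, hA.1.trace_eq_sum_eigenvalues, ← ofReal_prod, ← ofReal_sum,
    ofReal_re, ofReal_re, Real.log_prod fun i _ ↦ (hpos i).ne', Fintype.card_eq_sum_ones,
    Nat.cast_sum, Nat.cast_one, ← Finset.sum_add_distrib]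
  exact Finset.sum_le_sum fun i _ ↦ by linarith [Real.log_le_sub_one_of_pos (hpos i)]

open scoped MatrixOrder in
lemma card_add_log_re_det_le_re_trace_mul {W : Matrix n n 𝕜} (hW : W.PosDef) (hA : A.PosDef) :
    (Fintype.card n : ℝ) + Real.log (re A.det) ≤ re (W * A).trace - Real.log (re W.det) := by
  obtain ⟨B, rfl⟩ := CStarAlgebra.nonneg_iff_eq_star_mul_self.mp hA.posSemidef.nonneg
  have hB : IsUnit B := (isUnit_iff_isUnit_det B).mpr <| isUnit_of_mul_isUnit_right <|
    det_mul (star B) B ▸ (isUnit_iff_isUnit_det _).mp hA.isUnit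
  have hM : (B * W * star B).PosDef := hB.posDef_star_right_conjugate_iff.mpr hW
  have htrace : (B * W * star B).trace = (W * (star B * B)).trace := by
    rw [trace_mul_comm, ← Matrix.mul_assoc, trace_mul_comm]
  have hdet : (B * W * star B).det = W.det * (star B * B).det := by
    rw [det_mul, det_mul, det_mul]; ring
  have := hM.card_add_log_re_det_le_re_trace
  rw [htrace, hdet, hW.re_det_mul, Real.log_mul hW.re_det_pos.ne' hA.re_det_pos.ne'] at this
  linarith

end PosDef

open scoped MatrixOrder in
lemma PosSemidef.re_trace_mul_nonneg {W Q : Matrix n n 𝕜} (hW : W.PosSemidef)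
    (hQ : Q.PosSemidef) : 0 ≤ re (W * Q).trace := by
  obtain ⟨B, rfl⟩ := CStarAlgebra.nonneg_iff_eq_star_mul_self.mp hQ.nonneg
  rw [← Matrix.mul_assoc, trace_mul_comm, ← Matrix.mul_assoc, star_eq_conjTranspose]
  exact (nonneg_iff.mp (hW.mul_mul_conjTranspose_same B).trace_nonneg).1

lemma det_one_add_mul_mul_mul {α : Type*} [CommRing α] (A : Matrix m n α) (B : Matrix n n α)
    (T : Matrix n m α) (C : Matrix m m α) (hB : IsUnit B.det) :
    (1 + A * B * T * C).det = B.det * (B⁻¹ + T * C * A).det := by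
  calc (1 + A * B * T * C).det = (1 + A * (B * T * C)).det := by simp only [Matrix.mul_assoc]
    _ = (1 + B * T * C * A).det := det_one_add_mul_comm _ _
    _ = B.det * (B⁻¹ + T * C * A).det := by
      rw [← det_mul, Matrix.mul_add, mul_nonsing_inv _ hB]
      simp only [Matrix.mul_assoc]

end Matrix

noncomputable section Wmmse

variable {α m n : Type*} [CommRing α] [StarRing α] [Fintype m] [Fintype n] [DecidableEq m]
  (S : Matrix m n α) (Sg : Matrix n n α) (R : Matrix m m α)

def mseMatrix (U : Matrix n m α) : Matrix n n α :=
  Sg - U * S * Sg - Sg * Sᴴ * Uᴴ + U * R * Uᴴ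

def mmseFilter : Matrix n m α :=
  Sg * Sᴴ * R⁻¹

def mmseError : Matrix n n α :=
  Sg - mmseFilter S Sg R * S * Sg

variable {S Sg R}

lemma mseMatrix_eq_mmseError_add (hSg : Sg.IsHermitian) (hR : R.IsHermitian) (hRu : IsUnit R.det)
    (U : Matrix n m α) :
    mseMatrix S Sg R U =
      mmseError S Sg R + (U - mmseFilter S Sg R) * R * (U - mmseFilter S Sg R)ᴴ := by
  have hVR (X : Matrix m n α) : mmseFilter S Sg R * (R * X) = Sg * (Sᴴ * X) := by
    simp only [mmseFilter, Matrix.mul_assoc, nonsing_inv_mul_cancel_left _ _ hRu]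
  have hRV : R * (mmseFilter S Sg R)ᴴ = S * Sg := by
    rw [mmseFilter, conjTranspose_mul, conjTranspose_mul, conjTranspose_nonsing_inv, hR.eq, hSg.eq,
      conjTranspose_conjTranspose, mul_nonsing_inv_cancel_left _ _ hRu]
  simp only [mseMatrix, mmseError, conjTranspose_sub, Matrix.sub_mul, Matrix.mul_sub,
    Matrix.mul_assoc, hVR, hRV]
  abel

lemma mseMatrix_mmseFilter (hSg : Sg.IsHermitian) (hR : R.IsHermitian) (hRu : IsUnit R.det) :
    mseMatrix S Sg R (mmseFilter S Sg R) = mmseError S Sg R := by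
  simp [mseMatrix_eq_mmseError_add hSg hR hRu]

lemma mmseError_add_eq_inv [DecidableEq n] {Rin : Matrix m m α} (hSg : IsUnit Sg.det)
    (hRin : IsUnit Rin.det) (hR : IsUnit (S * Sg * Sᴴ + Rin).det) :
    mmseError S Sg (S * Sg * Sᴴ + Rin) = (Sg⁻¹ + Sᴴ * Rin⁻¹ * S)⁻¹ := by
  have hSg' : IsUnit Sg⁻¹ := isUnit_nonsing_inv_iff.mpr ((isUnit_iff_isUnit_det Sg).mpr hSg)
  have hRin' : IsUnit Rin⁻¹ := isUnit_nonsing_inv_iff.mpr ((isUnit_iff_isUnit_det Rin).mpr hRin)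
  rw [add_mul_mul_inv_eq_sub Sg⁻¹ Sᴴ Rin⁻¹ S hSg' hRin', nonsing_inv_nonsing_inv _ hSg,
    nonsing_inv_nonsing_inv _ hRin, add_comm Rin]
  · rfl
  · rwa [nonsing_inv_nonsing_inv _ hSg, nonsing_inv_nonsing_inv _ hRin, add_comm Rin,
      isUnit_iff_isUnit_det]

end Wmmse

/-- with `Σ` positive definite, the infimum of the weighted-MMSE
objective `tr(W E(U)) − log det W` over all filters `U` and all Hermitian
positive definite weights `W` equals
`n + log det Σ − log det(I + S Σ Sᴴ R_in⁻¹)`, attained at `U* = Σ Sᴴ R⁻¹` and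
`W* = E(U*)⁻¹`; hence maximizing the rate is equivalent to minimizing the
jointly optimized WMMSE objective. -/
theorem wmmse_rate_equivalence {k n : ℕ}
    (S : Matrix (Fin k) (Fin n) ℂ) (Sg : Matrix (Fin n) (Fin n) ℂ)
    (Rin : Matrix (Fin k) (Fin k) ℂ)
    (hSg : Sg.PosDef) (hRin : Rin.PosDef) :
    (∀ (U : Matrix (Fin n) (Fin k) ℂ) (W : Matrix (Fin n) (Fin n) ℂ), W.PosDef →
      (n : ℝ) + Real.log Sg.det.re -
          Real.log (((1 : Matrix (Fin k) (Fin k) ℂ) + S * Sg * Sᴴ * Rin⁻¹).det).re ≤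
        ((W * (Sg - U * S * Sg - Sg * Sᴴ * Uᴴ
            + U * (S * Sg * Sᴴ + Rin) * Uᴴ)).trace).re - Real.log W.det.re) ∧
    ((((Sg - Sg * Sᴴ * (S * Sg * Sᴴ + Rin)⁻¹ * S * Sg)⁻¹ *
          (Sg - (Sg * Sᴴ * (S * Sg * Sᴴ + Rin)⁻¹) * S * Sg
            - Sg * Sᴴ * (Sg * Sᴴ * (S * Sg * Sᴴ + Rin)⁻¹)ᴴ
            + (Sg * Sᴴ * (S * Sg * Sᴴ + Rin)⁻¹) * (S * Sg * Sᴴ + Rin)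
                * (Sg * Sᴴ * (S * Sg * Sᴴ + Rin)⁻¹)ᴴ)).trace).re -
        Real.log (((Sg - Sg * Sᴴ * (S * Sg * Sᴴ + Rin)⁻¹ * S * Sg)⁻¹).det).re =
      (n : ℝ) + Real.log Sg.det.re -
        Real.log (((1 : Matrix (Fin k) (Fin k) ℂ) + S * Sg * Sᴴ * Rin⁻¹).det).re) := by
  set R := S * Sg * Sᴴ + Rin
  have hR : R.PosDef := PosDef.posSemidef_add (hSg.posSemidef.mul_mul_conjTranspose_same S) hRin
  have hRu : IsUnit R.det := hR.det_pos.ne'.isUnit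
  set J := Sg⁻¹ + Sᴴ * Rin⁻¹ * S
  have hJ : J.PosDef := hSg.inv.add_posSemidef (hRin.inv.posSemidef.conjTranspose_mul_mul_same S)
  have hE : mmseError S Sg R = J⁻¹ :=
    mmseError_add_eq_inv hSg.det_pos.ne'.isUnit hRin.det_pos.ne'.isUnit hRu
  have hrate : Real.log (re (1 + S * Sg * Sᴴ * Rin⁻¹).det) =
      Real.log (re Sg.det) + Real.log (re J.det) := by
    rw [det_one_add_mul_mul_mul _ _ _ _ hSg.det_pos.ne'.isUnit, hSg.re_det_mul,
      Real.log_mul hSg.re_det_pos.ne' hJ.re_det_pos.ne']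
  simp only [← re_to_complex]
  constructor
  · intro U W hW
    change _ ≤ re (W * mseMatrix S Sg R U).trace - _
    rw [mseMatrix_eq_mmseError_add hSg.1 hR.1 hRu, hE, Matrix.mul_add, trace_add, map_add]
    have hopt := hW.card_add_log_re_det_le_re_trace_mul hJ.inv
    have hexcess := hW.posSemidef.re_trace_mul_nonneg
      (hR.posSemidef.mul_mul_conjTranspose_same (U - mmseFilter S Sg R))
    rw [hJ.log_re_det_inv, Fintype.card_fin] at hopt
    linarith
  · change re ((mmseError S Sg R)⁻¹ * mseMatrix S Sg R (mmseFilter S Sg R)).trace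
      - Real.log (re (mmseError S Sg R)⁻¹.det) = _
    have hJu : IsUnit J.det := hJ.det_pos.ne'.isUnit
    rw [mseMatrix_mmseFilter hSg.1 hR.1 hRu, hE, nonsing_inv_mul _ (isUnit_nonsing_inv_det _ hJu),
      trace_one, Fintype.card_fin, natCast_re, nonsing_inv_nonsing_inv _ hJu, hrate]
    ring
end

section
/- Let A be an n×n complex Hermitian positive semidefinite matrix, B an n×n complex Hermitian positive definite matrix, and U an m×n complex matrix such that U B Uᴴ is positive definite. Then det(I_m + (U A Uᴴ)(U B Uᴴ)⁻¹) and det(I_n + A B⁻¹) are positive real numbers and det(I_m + (U A Uᴴ)(U B Uᴴ)⁻¹) ≤ det(I_n + A B⁻¹); that is, the Gaussian mutual information after linear receive filtering by U never exceeds the unfiltered mutual information (the data processing inequality for linear filters). -/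
/-!
Whiten both sides with square roots. For `C * C = B` and `D * D = U * B * Uᴴ` (Hermitian),
`det (1 + A * B⁻¹) = det (1 + S)` with `S = C⁻¹ * A * C⁻¹ ≥ 0`, and the filtered determinant is
`det (1 + V * S * Vᴴ)` with `V = D⁻¹ * U * C`, which satisfies `V * Vᴴ = 1`. Sylvester's identity
turns it into `det (1 + G * (Vᴴ * V) * G)` with `G * G = S`; since `Vᴴ * V ≤ 1`, the matrix
`G * (Vᴴ * V) * G` lies below `S` in the Loewner order, and `det` is monotone there.
-/

open Matrix
open scoped ComplexOrder MatrixOrder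

namespace Matrix

variable {𝕜 k l : Type*} [RCLike 𝕜] [Fintype k] [Fintype l] [DecidableEq l]

lemma inv_mul_mul_conjTranspose_inv_mul_eq_one {D : Matrix l l 𝕜} {W : Matrix l k 𝕜}
    (hD : D.IsHermitian) (hDu : IsUnit D.det) (hDD : D * D = W * Wᴴ) :
    D⁻¹ * W * (D⁻¹ * W)ᴴ = 1 := by
  rw [conjTranspose_mul, hD.inv.eq, Matrix.mul_assoc, ← Matrix.mul_assoc W, ← hDD,
    mul_nonsing_inv_cancel_right _ _ hDu, nonsing_inv_mul _ hDu]

variable [DecidableEq k]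

lemma PosDef.exists_isHermitian_mul_self_eq {P : Matrix k k 𝕜} (hP : P.PosDef) :
    ∃ R : Matrix k k 𝕜, R.IsHermitian ∧ IsUnit R.det ∧ R * R = P :=
  ⟨CFC.sqrt P, (CFC.sqrt_nonneg P).posSemidef.isHermitian,
    (isUnit_iff_isUnit_det _).mp <|
      CFC.isUnit_sqrt_iff_isStrictlyPositive.mpr hP.isStrictlyPositive,
    CFC.sqrt_mul_sqrt_self P hP.posSemidef.nonneg⟩

lemma one_le_det_of_one_le {P : Matrix k k 𝕜} (hP : 1 ≤ P) : 1 ≤ P.det := by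
  have hPH : P.IsHermitian := by
    simpa using (le_iff.mp hP).isHermitian.add isHermitian_one
  have hspec := (CFC.one_le_iff (R := ℝ) P hPH.isSelfAdjoint).mp hP
  rw [hPH.det_eq_prod_eigenvalues, ← RCLike.ofReal_prod]
  exact_mod_cast Finset.one_le_prod fun i _ ↦ hspec _ (hPH.eigenvalues_mem_spectrum_real i)

lemma PosDef.det_le_det_of_le {P Q : Matrix k k 𝕜} (hP : P.PosDef) (hPQ : P ≤ Q) :
    P.det ≤ Q.det := by
  obtain ⟨R, hRH, hR, hRR⟩ := hP.exists_isHermitian_mul_self_eq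
  have hN : 1 ≤ R⁻¹ * Q * R⁻¹ := by
    have := hRH.inv.isSelfAdjoint.conjugate_le_conjugate hPQ
    rwa [← hRR, ← Matrix.mul_assoc, nonsing_inv_mul _ hR, Matrix.one_mul,
      mul_nonsing_inv _ hR] at this
  have hQ : Q = R * (R⁻¹ * Q * R⁻¹) * R := by
    simp only [← Matrix.mul_assoc, mul_nonsing_inv _ hR, Matrix.one_mul,
      nonsing_inv_mul_cancel_right _ _ hR]
  generalize R⁻¹ * Q * R⁻¹ = N at hN hQ
  calc P.det = P.det * 1 := (mul_one _).symm
    _ ≤ P.det * N.det := by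
        gcongr
        · exact hP.det_pos.le
        · exact one_le_det_of_one_le hN
    _ = Q.det := by
        rw [hQ, det_mul, det_mul, ← hRR, det_mul]
        ring

lemma det_one_add_mul_inv_of_mul_self_eq {P R : Matrix k k 𝕜} (hRR : R * R = P)
    (X : Matrix k k 𝕜) : (1 + X * P⁻¹).det = (1 + R⁻¹ * X * R⁻¹).det := by
  rw [← hRR, Matrix.mul_inv_rev, ← Matrix.mul_assoc, det_one_add_mul_comm, Matrix.mul_assoc]

lemma conjTranspose_mul_self_le_one {V : Matrix l k 𝕜} (hV : V * Vᴴ = 1) : Vᴴ * V ≤ 1 := by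
  -- `1 - Vᴴ * V` is an orthogonal projection
  have hproj : (1 - Vᴴ * V)ᴴ * (1 - Vᴴ * V) = 1 - Vᴴ * V := by
    simp only [conjTranspose_sub, conjTranspose_one, conjTranspose_mul, conjTranspose_conjTranspose,
      Matrix.sub_mul, Matrix.mul_sub, Matrix.one_mul, Matrix.mul_one, Matrix.mul_assoc,
      ← Matrix.mul_assoc V, hV]
    abel
  rw [le_iff, ← hproj]
  exact posSemidef_conjTranspose_mul_self _

lemma det_one_add_mul_mul_conjTranspose_le {S : Matrix k k 𝕜} (hS : S.PosSemidef)
    {V : Matrix l k 𝕜} (hV : V * Vᴴ = 1) : (1 + V * S * Vᴴ).det ≤ (1 + S).det := by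
  set G := CFC.sqrt S
  have hG : G.IsHermitian := (CFC.sqrt_nonneg S).posSemidef.isHermitian
  have hGG : G * G = S := CFC.sqrt_mul_sqrt_self S hS.nonneg
  have hcomm : (1 + V * S * Vᴴ).det = (1 + G * (Vᴴ * V) * G).det := by
    rw [← hGG, show V * (G * G) * Vᴴ = (V * G) * (G * Vᴴ) by simp only [Matrix.mul_assoc],
      det_one_add_mul_comm]
    simp only [Matrix.mul_assoc]
  have hle : G * (Vᴴ * V) * G ≤ S := by
    simpa [hGG] using hG.isSelfAdjoint.conjugate_le_conjugate (conjTranspose_mul_self_le_one hV)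
  have hpos : (1 + G * (Vᴴ * V) * G).PosDef := by
    refine PosDef.one.add_posSemidef ?_
    simpa [hG.eq, Matrix.mul_assoc] using posSemidef_conjTranspose_mul_self (V * G)
  rw [hcomm]
  exact hpos.det_le_det_of_le (add_le_add_right hle 1)

end Matrix

theorem data_processing_inequality_linear_filter_general {m n : ℕ}
    (A B : Matrix (Fin n) (Fin n) ℂ) (U : Matrix (Fin m) (Fin n) ℂ)
    (hA : A.PosSemidef) (hB : B.PosDef) (hUB : (U * B * Uᴴ).PosDef) :
    (((1 : Matrix (Fin m) (Fin m) ℂ) + (U * A * Uᴴ) * (U * B * Uᴴ)⁻¹).det.im = 0 ∧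
      0 < ((1 : Matrix (Fin m) (Fin m) ℂ) + (U * A * Uᴴ) * (U * B * Uᴴ)⁻¹).det.re) ∧
    (((1 : Matrix (Fin n) (Fin n) ℂ) + A * B⁻¹).det.im = 0 ∧
      0 < ((1 : Matrix (Fin n) (Fin n) ℂ) + A * B⁻¹).det.re) ∧
    ((1 : Matrix (Fin m) (Fin m) ℂ) + (U * A * Uᴴ) * (U * B * Uᴴ)⁻¹).det.re ≤
      ((1 : Matrix (Fin n) (Fin n) ℂ) + A * B⁻¹).det.re := by
  obtain ⟨C, hC, hCu, hCC⟩ := hB.exists_isHermitian_mul_self_eq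
  obtain ⟨D, hD, hDu, hDD⟩ := hUB.exists_isHermitian_mul_self_eq
  set S := C⁻¹ * A * C⁻¹
  set V := D⁻¹ * (U * C)
  have hS : S.PosSemidef := by
    simpa [S, hC.inv.eq] using hA.conjTranspose_mul_mul_same C⁻¹
  have hV : V * Vᴴ = 1 := by
    refine inv_mul_mul_conjTranspose_inv_mul_eq_one hD hDu ?_
    rw [hDD, conjTranspose_mul, hC.eq, ← hCC]
    simp only [Matrix.mul_assoc]
  have hR : (1 + A * B⁻¹).det = (1 + S).det := det_one_add_mul_inv_of_mul_self_eq hCC A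
  have hL : (1 + U * A * Uᴴ * (U * B * Uᴴ)⁻¹).det = (1 + V * S * Vᴴ).det := by
    rw [det_one_add_mul_inv_of_mul_self_eq hDD]
    congr 2
    simp only [V, S, conjTranspose_mul, hC.eq, hD.inv.eq, Matrix.mul_assoc,
      mul_nonsing_inv_cancel_left _ _ hCu, nonsing_inv_mul_cancel_left _ _ hCu]
  obtain ⟨hLre, hLim⟩ :=
    Complex.pos_iff.mp (PosDef.one.add_posSemidef (hS.mul_mul_conjTranspose_same V)).det_pos
  obtain ⟨hRre, hRim⟩ := Complex.pos_iff.mp (PosDef.one.add_posSemidef hS).det_pos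
  rw [hL, hR]
  exact ⟨⟨hLim.symm, hLre⟩, ⟨hRim.symm, hRre⟩,
    (Complex.le_def.mp (det_one_add_mul_mul_conjTranspose_le hS hV)).1⟩

/-- data processing inequality for linear receive filters:
`det(I_m + (U A Uᴴ)(U B Uᴴ)⁻¹) ≤ det(I_n + A B⁻¹)`, both determinants being
positive real numbers. -/
theorem data_processing_inequality_linear_filter {m n : ℕ}
    (hm : 0 < m) (hn : 0 < n)
    (A B : Matrix (Fin n) (Fin n) ℂ) (U : Matrix (Fin m) (Fin n) ℂ)
    (hA : A.PosSemidef) (hB : B.PosDef) (hUB : (U * B * Uᴴ).PosDef) :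
    (((1 : Matrix (Fin m) (Fin m) ℂ) + (U * A * Uᴴ) * (U * B * Uᴴ)⁻¹).det.im = 0 ∧
      0 < ((1 : Matrix (Fin m) (Fin m) ℂ) + (U * A * Uᴴ) * (U * B * Uᴴ)⁻¹).det.re) ∧
    (((1 : Matrix (Fin n) (Fin n) ℂ) + A * B⁻¹).det.im = 0 ∧
      0 < ((1 : Matrix (Fin n) (Fin n) ℂ) + A * B⁻¹).det.re) ∧
    ((1 : Matrix (Fin m) (Fin m) ℂ) + (U * A * Uᴴ) * (U * B * Uᴴ)⁻¹).det.re ≤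
      ((1 : Matrix (Fin n) (Fin n) ℂ) + A * B⁻¹).det.re :=
  data_processing_inequality_linear_filter_general A B U hA hB hUB
end
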